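/- arXiv:2011.13310 — 2 statements merged into one kernel-verified Lean document; each statement's English description precedes it below -/
import Mathlib

section
/- Let G be a torsion GGS group and H ≤ G a subgroup of type III generated by a set S ⊆ H. Then for any x ∈ S with α_x ≠ 0, the set S' = { x^{k_1} y x^{k_2} : y ∈ S, k_1, k_2 ∈ {0,1,...,p−1}, k_1 α_x + α_y + k_2 α_x ≡ 0 mod p } generates Stab_H(L_1), the stabilizer in H of the first level. -/
/-- Vertices of the rooted regular tree over alphabet `A`: finite words in `A`. -/
abbrev Vert (A : Type*) := List A

/-- The automorphism group of the rooted regular tree with vertex set `Vert A`: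
length-preserving permutations of the vertices that preserve the prefix order. -/
def treeAut (A : Type*) : Subgroup (Equiv.Perm (Vert A)) where
  carrier := { g | (∀ v : Vert A, (g v).length = v.length) ∧
    ∀ v w : Vert A, v <+: w ↔ g v <+: g w }
  one_mem' := ⟨fun _ => rfl, fun _ _ => Iff.rfl⟩
  mul_mem' := by
    rintro g h ⟨hg1, hg2⟩ ⟨hh1, hh2⟩
    refine ⟨fun v => ?_, fun v w => ?_⟩
    · simp only [Equiv.Perm.mul_apply, hg1, hh1]
    · simpa only [Equiv.Perm.mul_apply] using (hh2 v w).trans (hg2 (h v) (h w))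
  inv_mem' := by
    rintro g ⟨hg1, hg2⟩
    refine ⟨fun v => ?_, fun v w => ?_⟩
    · have h1 := hg1 (g⁻¹ v)
      rw [show g (g⁻¹ v) = v from g.apply_symm_apply v] at h1
      exact h1.symm
    · have h2 := hg2 (g⁻¹ v) (g⁻¹ w)
      rw [show g (g⁻¹ v) = v from g.apply_symm_apply v,
        show g (g⁻¹ w) = w from g.apply_symm_apply w] at h2
      exact h2.symm

open scoped Classical in
/-- The section `φ_v(g)` of an automorphism `g` at the vertex `v`: the unique
permutation `s` with `g (v ++ w) = g v ++ s w` for all `w` (it exists and is unique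
whenever `g` is a tree automorphism). -/
noncomputable def sect {A : Type*} (g : Equiv.Perm (Vert A)) (v : Vert A) :
    Equiv.Perm (Vert A) :=
  if h : ∃ s : Equiv.Perm (Vert A), ∀ w : Vert A, g (v ++ w) = g v ++ s w then h.choose else 1

/-- The `n`-th level of the tree: words of length `n`. -/
def level (A : Type*) (n : ℕ) : Set (Vert A) := { v | v.length = n }

/-- The pointwise stabilizer in `G` of a set `S` of vertices. -/
def stabSet {A : Type*} (G : Subgroup (Equiv.Perm (Vert A))) (S : Set (Vert A)) :
    Subgroup (Equiv.Perm (Vert A)) where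
  carrier := { g | g ∈ G ∧ ∀ v ∈ S, g v = v }
  one_mem' := ⟨G.one_mem, fun _ _ => rfl⟩
  mul_mem' := by
    rintro g h ⟨hg, hg2⟩ ⟨hh, hh2⟩
    exact ⟨G.mul_mem hg hh, fun v hv => by
      simp only [Equiv.Perm.mul_apply, hh2 v hv, hg2 v hv]⟩
  inv_mem' := by
    rintro g ⟨hg, hg2⟩
    refine ⟨G.inv_mem hg, fun v hv => ?_⟩
    conv_lhs => rw [← hg2 v hv]
    exact g.symm_apply_apply v

/-- The stabilizer in `G` of a single vertex `v`. -/
def vstab {A : Type*} (G : Subgroup (Equiv.Perm (Vert A))) (v : Vert A) :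
    Subgroup (Equiv.Perm (Vert A)) := stabSet G {v}

/-- The pointwise stabilizer in `G` of the `n`-th level. -/
def lstab {A : Type*} (G : Subgroup (Equiv.Perm (Vert A))) (n : ℕ) :
    Subgroup (Equiv.Perm (Vert A)) := stabSet G (level A n)

/-- The rigid stabilizer of a vertex `v` in `G`: elements of `G` acting trivially
outside the subtree rooted at `v`. -/
def rist {A : Type*} (G : Subgroup (Equiv.Perm (Vert A))) (v : Vert A) :
    Subgroup (Equiv.Perm (Vert A)) where
  carrier := { g | g ∈ G ∧ ∀ w : Vert A, ¬ v <+: w → g w = w }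
  one_mem' := ⟨G.one_mem, fun _ _ => rfl⟩
  mul_mem' := by
    rintro g h ⟨hg, hg2⟩ ⟨hh, hh2⟩
    exact ⟨G.mul_mem hg hh, fun w hw => by
      simp only [Equiv.Perm.mul_apply, hh2 w hw, hg2 w hw]⟩
  inv_mem' := by
    rintro g ⟨hg, hg2⟩
    refine ⟨G.inv_mem hg, fun w hw => ?_⟩
    conv_lhs => rw [← hg2 w hw]
    exact g.symm_apply_apply w

/-- The rigid stabilizer of the `n`-th level: the subgroup generated by the rigid
stabilizers of the vertices of level `n`. -/
def ristLevel {A : Type*} (G : Subgroup (Equiv.Perm (Vert A))) (n : ℕ) :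
    Subgroup (Equiv.Perm (Vert A)) := ⨆ v ∈ level A n, rist G v

/-- The subgroup `φ_v(H)` generated by (equivalently, consisting of, when `H`
stabilizes `v`) the sections at `v` of the elements of `H`. -/
def sectGrp {A : Type*} (H : Subgroup (Equiv.Perm (Vert A))) (v : Vert A) :
    Subgroup (Equiv.Perm (Vert A)) :=
  Subgroup.closure ((fun g => sect g v) '' (H : Set (Equiv.Perm (Vert A))))

/-- A transversal of the tree: a finite set of vertices met exactly once by every
infinite ray from the root. -/
def IsTransversal (A : Type*) (X : Set (Vert A)) : Prop :=
  X.Finite ∧ ∀ ω : ℕ → A, ∃! n : ℕ, (List.ofFn fun i : Fin n => ω i.val) ∈ X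

/-- The subgroup induction property. -/
def HasSGIP {A : Type*} (G : Subgroup (Equiv.Perm (Vert A))) : Prop :=
  ∀ H : Subgroup (Equiv.Perm (Vert A)), H ≤ G → H.FG →
    ∃ X : Set (Vert A), IsTransversal A X ∧ ∀ v ∈ X,
      sectGrp (stabSet H X) v = ⊥ ∨
      (sectGrp (stabSet H X) v).relIndex (sectGrp (vstab G v) v) ≠ 0

/-- `G` acts transitively on every level of the tree. -/
def LevelTransitive {A : Type*} (G : Subgroup (Equiv.Perm (Vert A))) : Prop :=
  ∀ v w : Vert A, v.length = w.length → ∃ g ∈ G, g v = w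

/-- Weakly branch: level-transitive with all rigid vertex stabilizers infinite. -/
def IsWeaklyBranch {A : Type*} (G : Subgroup (Equiv.Perm (Vert A))) : Prop :=
  LevelTransitive G ∧ ∀ v : Vert A, (rist G v : Set (Equiv.Perm (Vert A))).Infinite

/-- Branch: weakly branch and every level rigid stabilizer has finite index in `G`. -/
def IsBranch {A : Type*} (G : Subgroup (Equiv.Perm (Vert A))) : Prop :=
  IsWeaklyBranch G ∧ ∀ n : ℕ, (ristLevel G n).relIndex G ≠ 0

/-- Self-similar: all sections of vertex stabilizers land in `G`. -/
def SelfSimilar {A : Type*} (G : Subgroup (Equiv.Perm (Vert A))) : Prop :=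
  ∀ v : Vert A, sectGrp (vstab G v) v ≤ G

/-- Self-replicating: `φ_v(Stab_G(v)) = G` for every vertex `v`. -/
def SelfReplicating {A : Type*} (G : Subgroup (Equiv.Perm (Vert A))) : Prop :=
  ∀ v : Vert A, sectGrp (vstab G v) v = G

/-- Strongly self-replicating: self-similar and `φ_v(Stab_G(L_n)) = G` for every `n`
and every vertex `v` of level `n`. -/
def StronglySelfReplicating {A : Type*} (G : Subgroup (Equiv.Perm (Vert A))) : Prop :=
  SelfSimilar G ∧ ∀ (n : ℕ) (v : Vert A), v.length = n → sectGrp (lstab G n) v = G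

/-- The congruence subgroup property: every finite-index subgroup of `G` contains
some level stabilizer. -/
def HasCSP {A : Type*} (G : Subgroup (Equiv.Perm (Vert A))) : Prop :=
  ∀ K : Subgroup (Equiv.Perm (Vert A)), K ≤ G → K.relIndex G ≠ 0 →
    ∃ n : ℕ, lstab G n ≤ K

/-- A group is just infinite if it is infinite and all its proper quotients are
finite, i.e. every nontrivial normal subgroup has finite index. -/
def JustInfinite (G : Type*) [Group G] : Prop :=
  Infinite G ∧ ∀ N : Subgroup G, N.Normal → N ≠ ⊥ → N.index ≠ 0

/-- `Φ_F(G)`: the intersection of all maximal subgroups of finite index of `G`. -/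
def PhiF (G : Type*) [Group G] : Subgroup G :=
  ⨅ M ∈ { M : Subgroup G | IsCoatom M ∧ M.index ≠ 0 }, M

/-- Two groups are commensurable if they have isomorphic finite-index subgroups. -/
def CommGroups (G₁ : Type*) (G₂ : Type*) [Group G₁] [Group G₂] : Prop :=
  ∃ (H₁ : Subgroup G₁) (H₂ : Subgroup G₂),
    H₁.index ≠ 0 ∧ H₂.index ≠ 0 ∧ Nonempty (H₁ ≃* H₂)
/-- The rooted automorphism `a` of the `p`-regular tree: the cyclic permutation
`(1 2 … p)` of the first level (adding `1` to the first letter). -/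
def aPerm (p : ℕ) : Equiv.Perm (Vert (ZMod p)) where
  toFun := fun l => match l with
    | [] => ([] : Vert (ZMod p))
    | x :: w => (x + 1) :: w
  invFun := fun l => match l with
    | [] => ([] : Vert (ZMod p))
    | x :: w => (x - 1) :: w
  left_inv := by rintro (_ | ⟨x, w⟩) <;> simp
  right_inv := by rintro (_ | ⟨x, w⟩) <;> simp

/-- The recursively defined generator `b = (a^{e_0}, …, a^{e_{p-2}}, b)`. -/
def bFun (p : ℕ) (e : Fin (p - 1) → ZMod p) : Vert (ZMod p) → Vert (ZMod p)
  | [] => []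
  | x :: w =>
    if h : x.val < p - 1 then x :: (aPerm p ^ (e ⟨x.val, h⟩).val) w
    else x :: bFun p e w

/-- Inverse of `bFun`. -/
def bInvFun (p : ℕ) (e : Fin (p - 1) → ZMod p) : Vert (ZMod p) → Vert (ZMod p)
  | [] => []
  | x :: w =>
    if h : x.val < p - 1 then x :: ((aPerm p ^ (e ⟨x.val, h⟩).val)⁻¹ : Equiv.Perm (Vert (ZMod p))) w
    else x :: bInvFun p e w

/-- The generator `b` of the GGS group as a tree automorphism. -/
def bPerm (p : ℕ) (e : Fin (p - 1) → ZMod p) : Equiv.Perm (Vert (ZMod p)) where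
  toFun := bFun p e
  invFun := bInvFun p e
  left_inv := by
    intro l
    induction l with
    | nil => rfl
    | cons x w ih =>
      by_cases h : x.val < p - 1
      · simp [bFun, bInvFun, h]
      · simp [bFun, bInvFun, h, ih]
  right_inv := by
    intro l
    induction l with
    | nil => rfl
    | cons x w ih =>
      by_cases h : x.val < p - 1
      · simp [bFun, bInvFun, h]
      · simp [bFun, bInvFun, h, ih]

/-- The GGS group with defining vector `e`. -/
def GGSGroup (p : ℕ) (e : Fin (p - 1) → ZMod p) : Subgroup (Equiv.Perm (Vert (ZMod p))) :=
  Subgroup.closure {aPerm p, bPerm p e}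

/-- The derived subgroup `G'` of the GGS group, as a subgroup of the ambient
permutation group. -/
def GGSDerived (p : ℕ) (e : Fin (p - 1) → ZMod p) : Subgroup (Equiv.Perm (Vert (ZMod p))) :=
  (commutator ↥(GGSGroup p e)).map (GGSGroup p e).subtype

/-- `g` can be written as `a^{i_1} b^{j_1} ⋯ a^{i_n} b^{j_n} a^{i_{n+1}}`. -/
def bWordLe (p : ℕ) (e : Fin (p - 1) → ZMod p) (g : Equiv.Perm (Vert (ZMod p)))
    (n : ℕ) : Prop :=
  ∃ i j : ℕ → ℤ,
    g = ((List.range n).map fun k => aPerm p ^ i k * bPerm p e ^ j k).prod * aPerm p ^ i n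

/-- The `b`-length `|g|`: the least number of `b`-syllables needed to write `g`. -/
noncomputable def bLen (p : ℕ) (e : Fin (p - 1) → ZMod p)
    (g : Equiv.Perm (Vert (ZMod p))) : ℕ :=
  sInf { n : ℕ | bWordLe p e g n }

/-- The generating set `{a, a², …, a^{p-1}, b, b², …, b^{p-1}}`. -/
def GGSGens (p : ℕ) (e : Fin (p - 1) → ZMod p) : Set (Equiv.Perm (Vert (ZMod p))) :=
  { x | ∃ k : ℕ, 1 ≤ k ∧ k ≤ p - 1 ∧ (x = aPerm p ^ k ∨ x = bPerm p e ^ k) }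

/-- The total length `λ(g)`: word length with respect to all nontrivial powers of
`a` and of `b`. -/
noncomputable def totalLen (p : ℕ) (e : Fin (p - 1) → ZMod p)
    (g : Equiv.Perm (Vert (ZMod p))) : ℕ :=
  sInf { n : ℕ | ∃ f : Fin n → Equiv.Perm (Vert (ZMod p)),
    (∀ k, f k ∈ GGSGens p e) ∧ g = (List.ofFn f).prod }

/-- `α` and `β` are the exponents (mod `p`) with `g ≡ a^α b^β` modulo `G'`. -/
def IsAlphaBeta (p : ℕ) (e : Fin (p - 1) → ZMod p) (g : Equiv.Perm (Vert (ZMod p)))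
    (α β : ℕ) : Prop :=
  α < p ∧ β < p ∧ (aPerm p ^ α * bPerm p e ^ β)⁻¹ * g ∈ GGSDerived p e

/-- `H` is of type II: `HG'/G' = ⟨b^j G'⟩` for some `j ∈ {0,1}`. -/
def TypeII (p : ℕ) (e : Fin (p - 1) → ZMod p)
    (H : Subgroup (Equiv.Perm (Vert (ZMod p)))) : Prop :=
  ∃ j : ℕ, j ≤ 1 ∧
    H ⊔ GGSDerived p e = Subgroup.closure {bPerm p e ^ j} ⊔ GGSDerived p e

/-- `H` is of type III: `HG'/G' = ⟨a b^j G'⟩` for some `j ∈ {0,…,p-1}`. -/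
def TypeIII (p : ℕ) (e : Fin (p - 1) → ZMod p)
    (H : Subgroup (Equiv.Perm (Vert (ZMod p)))) : Prop :=
  ∃ j : ℕ, j < p ∧
    H ⊔ GGSDerived p e = Subgroup.closure {aPerm p * bPerm p e ^ j} ⊔ GGSDerived p e

/-! Every element of a GGS group acts on the first level as the translation by its `α`, so
`Stab_H(L_1)` is the kernel of the character `H → ℤ/p`, `g ↦ α_g`. The claim is then a
Schreier-type fact about the kernel of a map onto the cyclic group generated by the image of
`x`: a word in `S` lying in the kernel is cut, by inserting `x ^ j * x ^ (-j)` after each letter,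
into pieces `x ^ k * y * x ^ m` of trivial image, and `x ^ p ∈ S'` lets the exponents be
reduced modulo `p`. -/

open Subgroup

theorem Int.exists_eq_mul_add_natCast_lt {n : ℕ} (hn : 0 < n) (k : ℤ) :
    ∃ q : ℤ, ∃ r : ℕ, r < n ∧ k = n * q + r := by
  have h0 := Int.emod_nonneg k (Int.natCast_ne_zero.mpr hn.ne')
  have h1 := Int.emod_lt_of_pos k (Int.natCast_pos.mpr hn)
  exact ⟨k / n, (k % n).toNat, by omega, by rw [Int.toNat_of_nonneg h0, Int.mul_ediv_add_emod]⟩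

theorem exists_zpow_eq_pow_of_pow_eq_one {M : Type*} [Group M] {a : M} {n : ℕ} (hn : 0 < n)
    (ha : a ^ n = 1) (i : ℤ) : ∃ k < n, a ^ i = a ^ k := by
  obtain ⟨q, r, hr, rfl⟩ := Int.exists_eq_mul_add_natCast_lt hn i
  exact ⟨r, hr, by rw [zpow_add, zpow_mul, zpow_natCast, ha, one_zpow, one_mul, zpow_natCast]⟩

section KerGenerators

variable {G Q : Type*} [Group G] [Group Q]

theorem map_zpow_orderOf_mul (χ : G →* Q) (x : G) (q : ℤ) :
    χ (x ^ ((orderOf (χ x) : ℤ) * q)) = 1 := by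
  rw [map_zpow, zpow_mul, zpow_natCast, pow_orderOf_eq_one, one_zpow]

variable (χ : G →* Q) (S : Set G) (x : G) in
def kerGenerators : Set G :=
  {g | ∃ y ∈ S, ∃ k₁ k₂ : ℕ, k₁ < orderOf (χ x) ∧ k₂ < orderOf (χ x) ∧
    χ (x ^ k₁ * y * x ^ k₂) = 1 ∧ g = x ^ k₁ * y * x ^ k₂}

variable {χ : G →* Q} {S : Set G} {x : G}

theorem zpow_orderOf_mul_mem_closure_kerGenerators (hx : x ∈ S) (hχx : IsOfFinOrder (χ x))
    (q : ℤ) : x ^ ((orderOf (χ x) : ℤ) * q) ∈ closure (kerGenerators χ S x) := by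
  have hn := hχx.orderOf_pos
  have hxn : x ^ orderOf (χ x) ∈ closure (kerGenerators χ S x) := by
    refine subset_closure ⟨x, hx, orderOf (χ x) - 1, 0, by omega, hn, ?_, ?_⟩ <;>
      rw [pow_zero, mul_one, ← pow_succ, Nat.sub_add_cancel hn]
    rw [map_pow, pow_orderOf_eq_one]
  rw [zpow_mul, zpow_natCast]
  exact zpow_mem hxn q

theorem zpow_mul_mul_zpow_mem_closure_kerGenerators_of_mem (hx : x ∈ S)
    (hχx : IsOfFinOrder (χ x)) {y : G} (hy : y ∈ S) {k m : ℤ}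
    (h : χ (x ^ k * y * x ^ m) = 1) : x ^ k * y * x ^ m ∈ closure (kerGenerators χ S x) := by
  set n := orderOf (χ x)
  obtain ⟨q, r, hr, rfl⟩ := Int.exists_eq_mul_add_natCast_lt hχx.orderOf_pos k
  obtain ⟨t, s, hs, rfl⟩ := Int.exists_eq_mul_add_natCast_lt hχx.orderOf_pos m
  have hsplit : x ^ ((n : ℤ) * q + r) * y * x ^ ((n : ℤ) * t + s) =
      x ^ ((n : ℤ) * q) * (x ^ r * y * x ^ s) * x ^ ((n : ℤ) * t) := by
    rw [add_comm _ (s : ℤ), zpow_add, zpow_add, zpow_natCast, zpow_natCast]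
    group
  rw [hsplit, map_mul, map_mul, map_zpow_orderOf_mul, map_zpow_orderOf_mul, one_mul,
    mul_one] at h
  rw [hsplit]
  exact mul_mem (mul_mem (zpow_orderOf_mul_mem_closure_kerGenerators hx hχx q)
    (subset_closure ⟨y, hy, r, s, hr, hs, h, rfl⟩))
    (zpow_orderOf_mul_mem_closure_kerGenerators hx hχx t)

theorem zpow_mul_mul_zpow_mem_closure_kerGenerators (hx : x ∈ S) (hχx : IsOfFinOrder (χ x))
    (hS : ∀ y ∈ S, χ y ∈ zpowers (χ x)) {h : G} (hh : h ∈ closure S) {k m : ℤ}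
    (h1 : χ (x ^ k * h * x ^ m) = 1) : x ^ k * h * x ^ m ∈ closure (kerGenerators χ S x) := by
  have hzpow : closure S ≤ (zpowers (χ x)).comap χ := (closure_le _).mpr hS
  induction hh using closure_induction generalizing k m with
  | mem y hy => exact zpow_mul_mul_zpow_mem_closure_kerGenerators_of_mem hx hχx hy h1
  | one =>
    rw [mul_one, ← zpow_add] at h1 ⊢
    obtain ⟨q, hq⟩ := orderOf_dvd_iff_zpow_eq_one.mpr (by rwa [map_zpow] at h1)
    rw [hq]
    exact zpow_orderOf_mul_mem_closure_kerGenerators hx hχx q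
  | mul g g' hg _ ihg ihg' =>
    obtain ⟨i, hi⟩ := mem_zpowers_iff.mp (mul_mem (zpow_mem_zpowers (χ x) k) (hzpow hg))
    have hsplit : x ^ k * (g * g') * x ^ m = x ^ k * g * x ^ (-i) * (x ^ i * g' * x ^ m) := by
      group
    have h2 : χ (x ^ k * g * x ^ (-i)) = 1 := by
      rw [map_mul, map_mul, map_zpow, map_zpow, ← hi, zpow_neg, mul_inv_cancel]
    rw [hsplit, map_mul, h2, one_mul] at h1
    rw [hsplit]
    exact mul_mem (ihg h2) (ihg' h1)
  | inv g _ ih =>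
    have hswap : x ^ k * g⁻¹ * x ^ m = (x ^ (-m) * g * x ^ (-k))⁻¹ := by group
    rw [hswap, map_inv, inv_eq_one] at h1
    rw [hswap]
    exact inv_mem (ih h1)

theorem closure_kerGenerators (hx : x ∈ S) (hχx : IsOfFinOrder (χ x))
    (hS : ∀ y ∈ S, χ y ∈ zpowers (χ x)) :
    closure (kerGenerators χ S x) = closure S ⊓ χ.ker := by
  apply le_antisymm
  · rw [closure_le]
    rintro _ ⟨y, hy, k₁, k₂, -, -, h1, rfl⟩
    have hxS := subset_closure (k := S) hx
    exact ⟨mul_mem (mul_mem (pow_mem hxS _) (subset_closure hy)) (pow_mem hxS _), h1⟩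
  · rintro h ⟨hh, h1⟩
    simpa using zpow_mul_mul_zpow_mem_closure_kerGenerators hx hχx hS hh (k := 0) (m := 0)
      (by simpa using h1)

end KerGenerators

section GGS

variable {p : ℕ} {e : Fin (p - 1) → ZMod p}

theorem aPerm_pow_nil (k : ℕ) : (aPerm p ^ k) [] = [] :=
  Equiv.Perm.pow_apply_eq_self_of_apply_eq_self rfl k

theorem aPerm_pow_cons (k : ℕ) (y : ZMod p) (w : Vert (ZMod p)) :
    (aPerm p ^ k) (y :: w) = (y + k) :: w := by
  induction k generalizing y with
  | zero => simp
  | succ k ih => rw [pow_succ', Equiv.Perm.mul_apply, ih]; simp [aPerm, add_assoc]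

theorem aPerm_pow_self : aPerm p ^ p = 1 := by
  ext1 v
  cases v with
  | nil => exact aPerm_pow_nil p
  | cons y w => simp [aPerm_pow_cons]

theorem bPerm_cons (y : ZMod p) (w : Vert (ZMod p)) :
    bPerm p e (y :: w) = if h : y.val < p - 1 then y :: (aPerm p ^ (e ⟨y.val, h⟩).val) w
      else y :: bPerm p e w := rfl

theorem bPerm_pow_cons (k : ℕ) (y : ZMod p) (w : Vert (ZMod p)) :
    (bPerm p e ^ k) (y :: w) = if h : y.val < p - 1 then
      y :: ((aPerm p ^ (e ⟨y.val, h⟩).val) ^ k) w else y :: (bPerm p e ^ k) w := by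
  induction k generalizing w with
  | zero => split <;> rfl
  | succ k ih =>
    rw [pow_succ, Equiv.Perm.mul_apply, bPerm_cons]
    split <;> rw [ih] <;> simp [*, pow_succ]

theorem bPerm_pow_self : bPerm p e ^ p = 1 := by
  ext1 v
  induction v with
  | nil => exact Equiv.Perm.pow_apply_eq_self_of_apply_eq_self rfl p
  | cons y w ih =>
    rw [bPerm_pow_cons]
    split
    · rw [← pow_mul, mul_comm, pow_mul, aPerm_pow_self, one_pow]; rfl
    · rw [ih]; rfl

theorem bPerm_singleton (y : ZMod p) : bPerm p e [y] = [y] := by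
  rw [bPerm_cons]
  split
  · rw [aPerm_pow_nil]
  · rfl

theorem exists_apply_singleton_eq_add {g : Equiv.Perm (Vert (ZMod p))} (hg : g ∈ GGSGroup p e) :
    ∃ c : ZMod p, ∀ y, g [y] = [y + c] := by
  induction hg using closure_induction with
  | mem g hg =>
    rcases hg with rfl | rfl
    · exact ⟨1, fun y => rfl⟩
    · exact ⟨0, fun y => by rw [bPerm_singleton, add_zero]⟩
  | one => exact ⟨0, fun y => by simp⟩
  | mul g h _ _ ihg ihh =>
    obtain ⟨c, hc⟩ := ihg
    obtain ⟨d, hd⟩ := ihh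
    exact ⟨d + c, fun y => by rw [Equiv.Perm.mul_apply, hd, hc, add_assoc]⟩
  | inv g _ ih =>
    obtain ⟨c, hc⟩ := ih
    exact ⟨-c, fun y => by rw [Equiv.Perm.inv_eq_iff_eq, hc, neg_add_cancel_right]⟩

def levelOneShift (g : Equiv.Perm (Vert (ZMod p))) : ZMod p := (g [0]).headD 0

theorem apply_singleton_eq_add_levelOneShift {g : Equiv.Perm (Vert (ZMod p))}
    (hg : g ∈ GGSGroup p e) (y : ZMod p) : g [y] = [y + levelOneShift g] := by
  obtain ⟨c, hc⟩ := exists_apply_singleton_eq_add hg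
  rw [hc, levelOneShift, hc, zero_add]
  rfl

variable (p e) in
def levelOneShiftHom : GGSGroup p e →* Multiplicative (ZMod p) where
  toFun g := .ofAdd (levelOneShift g.1)
  map_one' := rfl
  map_mul' g h := by
    have hgh := apply_singleton_eq_add_levelOneShift (g * h).2 0
    rw [coe_mul, Equiv.Perm.mul_apply, apply_singleton_eq_add_levelOneShift h.2,
      apply_singleton_eq_add_levelOneShift g.2, List.cons.injEq, zero_add, zero_add] at hgh
    rw [← ofAdd_add, add_comm, hgh.1]
    rfl

theorem levelOneShiftHom_eq_one_iff (g : GGSGroup p e) :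
    levelOneShiftHom p e g = 1 ↔ ∀ v ∈ level (ZMod p) 1, g.1 v = v := by
  refine ⟨fun h v hv => ?_, fun h => ?_⟩
  · obtain ⟨y, rfl⟩ := List.length_eq_one_iff.mp hv
    rw [apply_singleton_eq_add_levelOneShift g.2, ofAdd_eq_one.mp h, add_zero]
  · have h0 := h [0] rfl
    rw [apply_singleton_eq_add_levelOneShift g.2, List.cons.injEq, zero_add] at h0
    exact ofAdd_eq_one.mpr h0.1

variable (p e) in
def aGGS : GGSGroup p e := ⟨aPerm p, subset_closure (by simp)⟩

variable (p e) in
def bGGS : GGSGroup p e := ⟨bPerm p e, subset_closure (by simp)⟩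

theorem closure_aGGS_bGGS : closure {aGGS p e, bGGS p e} = ⊤ := by
  have h : ((↑) : GGSGroup p e → _) ⁻¹' {aPerm p, bPerm p e} = {aGGS p e, bGGS p e} := by
    ext g
    simp [aGGS, bGGS, Subtype.ext_iff]
  rw [← h]
  exact closure_closure_coe_preimage

theorem aGGS_pow_self : aGGS p e ^ p = 1 := Subtype.ext aPerm_pow_self

theorem bGGS_pow_self : bGGS p e ^ p = 1 := Subtype.ext bPerm_pow_self

theorem levelOneShiftHom_aGGS : levelOneShiftHom p e (aGGS p e) = .ofAdd 1 :=
  congrArg Multiplicative.ofAdd (zero_add 1)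

theorem levelOneShiftHom_bGGS : levelOneShiftHom p e (bGGS p e) = 1 := by
  rw [levelOneShiftHom_eq_one_iff]
  rintro v hv
  obtain ⟨y, rfl⟩ := List.length_eq_one_iff.mp hv
  exact bPerm_singleton y

theorem isAlphaBeta_iff_mem_commutator {g : GGSGroup p e} {α β : ℕ} :
    IsAlphaBeta p e g α β ↔
      α < p ∧ β < p ∧
        (aGGS p e ^ α * bGGS p e ^ β)⁻¹ * g ∈ commutator (GGSGroup p e) := by
  rw [IsAlphaBeta, GGSDerived, ← mem_map_iff_mem (GGSGroup p e).subtype_injective]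
  rfl

theorem levelOneShiftHom_eq_ofAdd_of_isAlphaBeta {g : GGSGroup p e} {α β : ℕ}
    (h : IsAlphaBeta p e g α β) : levelOneShiftHom p e g = .ofAdd (α : ZMod p) := by
  obtain ⟨-, -, hcomm⟩ := isAlphaBeta_iff_mem_commutator.mp h
  have h1 := Abelianization.commutator_subset_ker (levelOneShiftHom p e) hcomm
  rw [MonoidHom.mem_ker, map_mul, map_inv, inv_mul_eq_one, map_mul, map_pow, map_pow,
    levelOneShiftHom_aGGS, levelOneShiftHom_bGGS, one_pow, mul_one] at h1
  rw [← h1, ← ofAdd_nsmul, nsmul_one]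

theorem exists_isAlphaBeta [NeZero p] (g : GGSGroup p e) :
    ∃ α β : ℕ, IsAlphaBeta p e g α β := by
  set q := (Abelianization.of : GGSGroup p e →* Abelianization (GGSGroup p e))
  have hq : q g ∈ closure {q (aGGS p e), q (bGGS p e)} := by
    rw [← Set.image_pair, ← MonoidHom.map_closure, closure_aGGS_bGGS]
    exact ⟨g, mem_top g, rfl⟩
  obtain ⟨i, j, hij⟩ := mem_closure_pair.mp hq
  obtain ⟨α, hα, hαi⟩ := exists_zpow_eq_pow_of_pow_eq_one (a := q (aGGS p e)) (NeZero.pos p)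
    (by rw [← map_pow, aGGS_pow_self, map_one]) i
  obtain ⟨β, hβ, hβj⟩ := exists_zpow_eq_pow_of_pow_eq_one (a := q (bGGS p e)) (NeZero.pos p)
    (by rw [← map_pow, bGGS_pow_self, map_one]) j
  refine ⟨α, β, isAlphaBeta_iff_mem_commutator.mpr ⟨hα, hβ, ?_⟩⟩
  rw [← Abelianization.ker_of, MonoidHom.mem_ker, map_mul, map_inv, inv_mul_eq_one, map_mul,
    map_pow, map_pow, ← hαi, ← hβj, hij]

theorem map_subtype_closure_preimage_inf_ker_levelOneShiftHom
    {S : Set (Equiv.Perm (Vert (ZMod p)))} (hS : S ⊆ GGSGroup p e) :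
    (closure ((GGSGroup p e).subtype ⁻¹' S) ⊓ (levelOneShiftHom p e).ker).map
      (GGSGroup p e).subtype = stabSet (closure S) (level (ZMod p) 1) := by
  have hcl :
      (closure ((GGSGroup p e).subtype ⁻¹' S)).map (GGSGroup p e).subtype = closure S := by
    rw [MonoidHom.map_closure, Set.image_preimage_eq_of_subset (by simpa using hS)]
  ext g
  constructor
  · rintro ⟨u, ⟨hu, hχu⟩, rfl⟩
    exact ⟨hcl ▸ mem_map_of_mem _ hu, (levelOneShiftHom_eq_one_iff u).mp hχu⟩
  · rintro ⟨hg, hfix⟩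
    obtain ⟨u, hu, rfl⟩ := mem_map.mp (hcl ▸ hg : g ∈ _)
    exact ⟨u, ⟨hu, (levelOneShiftHom_eq_one_iff u).mpr hfix⟩, rfl⟩

theorem orderOf_levelOneShiftHom_of_isAlphaBeta (hp : p.Prime) {x : GGSGroup p e} {α β : ℕ}
    (hx : IsAlphaBeta p e x α β) (hα : α ≠ 0) : orderOf (levelOneShiftHom p e x) = p := by
  have := Fact.mk hp
  rw [levelOneShiftHom_eq_ofAdd_of_isAlphaBeta hx, orderOf_ofAdd_eq_addOrderOf]
  refine addOrderOf_eq_prime (by simp) ?_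
  rw [Ne, ZMod.natCast_eq_zero_iff]
  exact fun h => hα (Nat.eq_zero_of_dvd_of_lt h hx.1)

theorem levelOneShiftHom_pow_mul_mul_pow_eq_one_iff [NeZero p] {x : GGSGroup p e} {αx βx : ℕ}
    (hx : IsAlphaBeta p e x αx βx) (y : GGSGroup p e) (k₁ k₂ : ℕ) :
    levelOneShiftHom p e (x ^ k₁ * y * x ^ k₂) = 1 ↔
      ∃ αy βy : ℕ, IsAlphaBeta p e y αy βy ∧ (k₁ * αx + αy + k₂ * αx) % p = 0 := by
  have hval {αy βy : ℕ} (hy : IsAlphaBeta p e y αy βy) :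
      levelOneShiftHom p e (x ^ k₁ * y * x ^ k₂) = 1 ↔
        (k₁ * αx + αy + k₂ * αx) % p = 0 := by
    rw [map_mul, map_mul, map_pow, map_pow, levelOneShiftHom_eq_ofAdd_of_isAlphaBeta hx,
      levelOneShiftHom_eq_ofAdd_of_isAlphaBeta hy, ← ofAdd_nsmul, ← ofAdd_nsmul, ← ofAdd_add,
      ← ofAdd_add, ofAdd_eq_one, ← Nat.dvd_iff_mod_eq_zero, ← ZMod.natCast_eq_zero_iff]
    push_cast
    simp only [nsmul_eq_mul]
  constructor
  · obtain ⟨αy, βy, hy⟩ := exists_isAlphaBeta y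
    exact fun h => ⟨αy, βy, hy, (hval hy).mp h⟩
  · rintro ⟨αy, βy, hy, hmod⟩
    exact (hval hy).mpr hmod

end GGS

theorem statement11_general (p : ℕ) (hp : p.Prime)
    (e : Fin (p - 1) → ZMod p)
    (H : Subgroup (Equiv.Perm (Vert (ZMod p)))) (hH : H ≤ GGSGroup p e)
    (S : Set (Equiv.Perm (Vert (ZMod p)))) (hSgen : Subgroup.closure S = H)
    (x : Equiv.Perm (Vert (ZMod p))) (hxS : x ∈ S)
    (αx βx : ℕ) (hx : IsAlphaBeta p e x αx βx) (hαx : αx ≠ 0) :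
    Subgroup.closure { g : Equiv.Perm (Vert (ZMod p)) |
        ∃ y ∈ S, ∃ k₁ k₂ : ℕ, k₁ < p ∧ k₂ < p ∧
          (∃ αy βy : ℕ, IsAlphaBeta p e y αy βy ∧ (k₁ * αx + αy + k₂ * αx) % p = 0) ∧
          g = x ^ k₁ * y * x ^ k₂ } =
      stabSet H (level (ZMod p) 1) := by
  have := Fact.mk hp
  subst hSgen
  have hSK : S ⊆ GGSGroup p e := subset_closure.trans hH
  set x₀ : GGSGroup p e := ⟨x, hSK hxS⟩
  have hord := orderOf_levelOneShiftHom_of_isAlphaBeta hp (x := x₀) hx hαx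
  have hfin : IsOfFinOrder (levelOneShiftHom p e x₀) :=
    orderOf_pos_iff.mp (by rw [hord]; exact hp.pos)
  have hzpow (y : GGSGroup p e) : levelOneShiftHom p e y ∈ zpowers (levelOneShiftHom p e x₀) :=
    mem_zpowers_of_prime_card (p := p)
      ((Nat.card_congr Multiplicative.toAdd).trans (Nat.card_zmod p))
      (fun h => hp.ne_one (by rw [← hord, h, orderOf_one]))
  rw [← map_subtype_closure_preimage_inf_ker_levelOneShiftHom hSK,
    ← closure_kerGenerators (x := x₀) hxS hfin (fun y _ => hzpow y), MonoidHom.map_closure,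
    kerGenerators, hord]
  congr 1
  ext g
  constructor
  · rintro ⟨y, hy, k₁, k₂, hk₁, hk₂, h1, rfl⟩
    exact ⟨_, ⟨⟨y, hSK hy⟩, hy, k₁, k₂, hk₁, hk₂,
      (levelOneShiftHom_pow_mul_mul_pow_eq_one_iff hx _ k₁ k₂).mpr h1, rfl⟩, rfl⟩
  · rintro ⟨_, ⟨y, hy, k₁, k₂, hk₁, hk₂, h1, rfl⟩, rfl⟩
    exact ⟨y, hy, k₁, k₂, hk₁, hk₂,
      (levelOneShiftHom_pow_mul_mul_pow_eq_one_iff hx y k₁ k₂).mp h1, rfl⟩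

/-- Lemma 4.4: for a type III subgroup `H` of a torsion GGS group generated by `S`,
and `x ∈ S` with `α_x ≠ 0`, the set
`S' = {x^{k₁} y x^{k₂} : y ∈ S, k₁,k₂ ∈ {0,…,p-1}, k₁α_x + α_y + k₂α_x ≡ 0 mod p}`
generates `Stab_H(L_1)`. -/
theorem statement11 (p : ℕ) (hp : p.Prime) (hodd : Odd p)
    (e : Fin (p - 1) → ZMod p) (he : e ≠ 0)
    (htor : ∀ g ∈ GGSGroup p e, IsOfFinOrder g)
    (H : Subgroup (Equiv.Perm (Vert (ZMod p)))) (hH : H ≤ GGSGroup p e)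
    (hIII : TypeIII p e H)
    (S : Set (Equiv.Perm (Vert (ZMod p)))) (hSgen : Subgroup.closure S = H)
    (x : Equiv.Perm (Vert (ZMod p))) (hxS : x ∈ S)
    (αx βx : ℕ) (hx : IsAlphaBeta p e x αx βx) (hαx : αx ≠ 0) :
    Subgroup.closure { g : Equiv.Perm (Vert (ZMod p)) |
        ∃ y ∈ S, ∃ k₁ k₂ : ℕ, k₁ < p ∧ k₂ < p ∧
          (∃ αy βy : ℕ, IsAlphaBeta p e y αy βy ∧ (k₁ * αx + αy + k₂ * αx) % p = 0) ∧
          g = x ^ k₁ * y * x ^ k₂ } =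
      stabSet H (level (ZMod p) 1) :=
  statement11_general p hp e H hH S hSgen x hxS αx βx hx hαx
end

section
/- Let G be a torsion GGS group and H < G a subgroup generated by elements of b-length at most 1. Then for every vertex v of the tree, the subgroup φ_v(Stab_H(v)) is generated by elements of b-length at most 1. -/
/-!
In `G_e` the elements of `b`-length at most one are the products `a^i b^j a^k`, and the section
of such an element at a first-level vertex is again of this form: a power of `a` at every vertex
but one, where it is `b^j`. As `φ_{xw}(Stab_H(xw)) = φ_w(Stab_{φ_x(Stab_H(x))}(w))`, induction
along `v` reduces the claim to a first-level vertex `x`.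

If no generator of `H` moves the first level, then `Stab_H(x) = H` and the sections at `x` of the
generators generate. Otherwise some generator `t` rotates the first level, and `Stab_H(x)` is
generated by the Schreier elements `r(α) s r(α + rot s)⁻¹`, where `r(α) = t^{n(α)}` rotates
the first level by `α`. The section at `x` of such an element is `a^m (a^i b^j a^k) a^n` as
soon as the sections of the `r(α)` are powers of `a`, and this is arranged by choosing every
`n(α)` in a window of `p` consecutive integers for which the orbit traversed by `t^{n(α)}`
avoids the one vertex where the section of `t` is a power of `b`.
-/

namespace GGS

open Subgroup

/-- Schreier's lemma, with the cosets of the kernel of `f` indexed by the values of `f`. -/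
lemma mem_closure_schreier {G A : Type*} [Group G] [AddGroup A] {S : Set G} {f : G → A}
    (hf : ∀ g ∈ closure S, ∀ h ∈ closure S, f (g * h) = f g + f h) {r : A → G}
    (hr0 : r 0 ∈ closure S) (hfr0 : f (r 0) = 0) {g : G} (hg : g ∈ closure S) (hg0 : f g = 0) :
    g ∈ closure (Set.image2 (fun a s => r a * s * (r (a + f s))⁻¹) Set.univ S) := by
  set M := closure (Set.image2 (fun a s => r a * s * (r (a + f s))⁻¹) Set.univ S)
  have hf1 : f 1 = 0 := by simpa using hf 1 (one_mem _) 1 (one_mem _)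
  have key : ∀ x ∈ closure S, ∀ a, r a * x * (r (a + f x))⁻¹ ∈ M := by
    intro x hx
    induction hx using closure_induction with
    | mem s hs => exact fun a => subset_closure ⟨a, trivial, s, hs, rfl⟩
    | one => simp [hf1, one_mem]
    | mul x y hx hy ihx ihy =>
      intro a
      convert mul_mem (ihx a) (ihy (a + f x)) using 1
      rw [hf x hx y hy, add_assoc]
      group
    | inv x hx ih =>
      intro a
      have hfinv : f x⁻¹ = -f x :=
        eq_neg_of_add_eq_zero_right (by rw [← hf x hx _ (inv_mem hx), mul_inv_cancel, hf1])
      convert inv_mem (ih (a + f x⁻¹)) using 1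
      rw [hfinv, neg_add_cancel_right]
      group
  have hr0M : r 0 ∈ M := by simpa [hfr0] using key (r 0) hr0 0
  have hgM : r 0 * g * (r 0)⁻¹ ∈ M := by simpa [hg0] using key g hg 0
  simpa [mul_assoc] using mul_mem (mul_mem (inv_mem hr0M) hgM) hr0M

section Sections

def sectional (A : Type*) : Subgroup (Equiv.Perm (Vert A)) where
  carrier := {g | ∀ v, ∃ s : Equiv.Perm (Vert A), ∀ w, g (v ++ w) = g v ++ s w}
  one_mem' _ := ⟨1, fun _ => rfl⟩
  mul_mem' := by
    rintro g h hg hh v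
    obtain ⟨sh, hsh⟩ := hh v
    obtain ⟨sg, hsg⟩ := hg (h v)
    exact ⟨sg * sh, fun w => by simp only [Equiv.Perm.mul_apply, hsh, hsg]⟩
  inv_mem' := by
    rintro g hg v
    obtain ⟨s, hs⟩ := hg (g⁻¹ v)
    refine ⟨s⁻¹, fun w => ?_⟩
    rw [Equiv.Perm.inv_eq_iff_eq, hs]
    simp

variable {A : Type*} {g h s : Equiv.Perm (Vert A)}

lemma apply_append_eq (hg : g ∈ sectional A) (v w : Vert A) :
    g (v ++ w) = g v ++ sect g v w := by
  classical
  rw [sect, dif_pos (hg v)]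
  exact (hg v).choose_spec w

lemma sect_eq_of_forall (hg : g ∈ sectional A) {v : Vert A}
    (hs : ∀ w, g (v ++ w) = g v ++ s w) : sect g v = s :=
  Equiv.ext fun w => List.append_cancel_left <| (apply_append_eq hg v w).symm.trans (hs w)

lemma apply_nil (hg : g ∈ sectional A) : g [] = [] := by
  obtain ⟨u, hu⟩ := g.surjective []
  exact List.append_eq_nil_iff.mp (hu ▸ apply_append_eq hg [] u).symm |>.1

lemma sect_nil (hg : g ∈ sectional A) : sect g [] = g :=
  sect_eq_of_forall hg fun w => by rw [apply_nil hg]; rfl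

lemma sect_one (v : Vert A) : sect 1 v = 1 :=
  sect_eq_of_forall (one_mem _) fun _ => rfl

lemma sect_mul (hg : g ∈ sectional A) (hh : h ∈ sectional A) (v : Vert A) :
    sect (g * h) v = sect g (h v) * sect h v :=
  sect_eq_of_forall (mul_mem hg hh) fun w => by
    simp only [Equiv.Perm.mul_apply, apply_append_eq hh, apply_append_eq hg]

lemma sect_inv (hg : g ∈ sectional A) (v : Vert A) :
    sect g⁻¹ v = (sect g (g⁻¹ v))⁻¹ :=
  sect_eq_of_forall (inv_mem hg) fun w => by
    rw [Equiv.Perm.inv_eq_iff_eq, apply_append_eq hg]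
    simp

lemma sect_zpow_of_apply_eq (hg : g ∈ sectional A) {v : Vert A} (hv : g v = v) (n : ℤ) :
    sect (g ^ n) v = sect g v ^ n := by
  induction n using Int.induction_on with
  | zero => exact sect_one v
  | succ n ih => rw [zpow_add_one, sect_mul (zpow_mem hg n) hg, hv, ih, zpow_add_one]
  | pred n ih =>
    rw [zpow_sub_one, sect_mul (zpow_mem hg _) (inv_mem hg), sect_inv hg,
      Equiv.Perm.inv_eq_iff_eq.mpr hv.symm, ih, zpow_sub_one]

lemma sect_apply_append (hg : g ∈ sectional A) (u v w : Vert A) :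
    sect g u (v ++ w) = sect g u v ++ sect g (u ++ v) w :=
  List.append_cancel_left <| by
    rw [← apply_append_eq hg, ← List.append_assoc, apply_append_eq hg, apply_append_eq hg,
      List.append_assoc]

lemma sect_mem_sectional (hg : g ∈ sectional A) (u : Vert A) : sect g u ∈ sectional A :=
  fun v => ⟨sect g (u ++ v), sect_apply_append hg u v⟩

lemma sect_append (hg : g ∈ sectional A) (u v : Vert A) :
    sect g (u ++ v) = sect (sect g u) v :=
  (sect_eq_of_forall (sect_mem_sectional hg u) (sect_apply_append hg u v)).symm

lemma mem_vstab {H : Subgroup (Equiv.Perm (Vert A))} {v : Vert A} :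
    g ∈ vstab H v ↔ g ∈ H ∧ g v = v :=
  ⟨fun hg => ⟨hg.1, hg.2 v rfl⟩, fun hg => ⟨hg.1, fun _ hw => hw ▸ hg.2⟩⟩

lemma vstab_mono {H K : Subgroup (Equiv.Perm (Vert A))} (hHK : H ≤ K) (v : Vert A) :
    vstab H v ≤ vstab K v :=
  fun _ hg => ⟨hHK hg.1, hg.2⟩

lemma sectGrp_vstab_nil {H : Subgroup (Equiv.Perm (Vert A))} (hH : H ≤ sectional A) :
    sectGrp (vstab H []) [] = H := by
  have hv : vstab H [] = H :=
    le_antisymm (fun _ hg => hg.1) fun g hg => mem_vstab.mpr ⟨hg, apply_nil (hH hg)⟩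
  rw [sectGrp, hv, Set.image_congr fun g hg => sect_nil (hH hg), Set.image_id', closure_eq]

lemma sectGrp_closure {X : Set (Equiv.Perm (Vert A))} {v : Vert A}
    (hX : closure X ≤ vstab (sectional A) v) :
    sectGrp (closure X) v = closure ((sect · v) '' X) := by
  refine le_antisymm ((closure_le _).mpr ?_) (closure_mono (Set.image_mono subset_closure))
  rintro _ ⟨g, hg, rfl⟩
  rw [SetLike.mem_coe]
  induction hg using closure_induction with
  | mem g hg => exact subset_closure ⟨g, hg, rfl⟩
  | one => simpa only [sect_one] using one_mem _
  | mul g h hg hh ihg ihh =>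
    obtain ⟨hgs, -⟩ := mem_vstab.mp (hX hg)
    obtain ⟨hhs, hhv⟩ := mem_vstab.mp (hX hh)
    simpa only [sect_mul hgs hhs, hhv] using mul_mem ihg ihh
  | inv g hg ihg =>
    obtain ⟨hgs, hgv⟩ := mem_vstab.mp (hX hg)
    simpa only [sect_inv hgs, Equiv.Perm.inv_eq_iff_eq.mpr hgv.symm] using inv_mem ihg

lemma exists_sect_eq_of_mem_sectGrp {K : Subgroup (Equiv.Perm (Vert A))} {v : Vert A}
    (hK : K ≤ vstab (sectional A) v) (hh : h ∈ sectGrp K v) : ∃ g ∈ K, sect g v = h := by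
  induction hh using closure_induction with
  | mem _ hh => exact hh
  | one => exact ⟨1, one_mem K, sect_one v⟩
  | mul _ _ _ _ ih ih' =>
    obtain ⟨g, hg, rfl⟩ := ih
    obtain ⟨g', hg', rfl⟩ := ih'
    obtain ⟨hg's, hg'v⟩ := mem_vstab.mp (hK hg')
    exact ⟨g * g', mul_mem hg hg', by rw [sect_mul (hK hg).1 hg's, hg'v]⟩
  | inv _ _ ih =>
    obtain ⟨g, hg, rfl⟩ := ih
    obtain ⟨hgs, hgv⟩ := mem_vstab.mp (hK hg)
    exact ⟨g⁻¹, inv_mem hg, by rw [sect_inv hgs, Equiv.Perm.inv_eq_iff_eq.mpr hgv.symm]⟩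

end Sections

section Rotational

variable {A : Type*} [AddCommGroup A] {g h s t : Equiv.Perm (Vert A)}

def rotational (A : Type*) [AddCommGroup A] : Subgroup (Equiv.Perm (Vert A)) where
  carrier := {g | g ∈ sectional A ∧ ∃ c : A, ∀ y, g [y] = [y + c]}
  one_mem' := ⟨one_mem _, 0, fun y => by simp⟩
  mul_mem' := by
    rintro g h ⟨hg, c, hc⟩ ⟨hh, d, hd⟩
    exact ⟨mul_mem hg hh, d + c, fun y => by rw [Equiv.Perm.mul_apply, hd, hc, add_assoc]⟩
  inv_mem' := by
    rintro g ⟨hg, c, hc⟩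
    exact ⟨inv_mem hg, -c, fun y => by rw [Equiv.Perm.inv_eq_iff_eq, hc, neg_add_cancel_right]⟩

/-- Meaningful only on `rotational A`, where `g [y] = [y + rot g]`. -/
def rot (g : Equiv.Perm (Vert A)) : A := (g [0]).headD 0

lemma rotational_le_sectional : rotational A ≤ sectional A := fun _ hg => hg.1

lemma apply_singleton (hg : g ∈ rotational A) (y : A) : g [y] = [y + rot g] := by
  obtain ⟨-, c, hc⟩ := hg
  rw [rot, hc, hc, zero_add]
  rfl

lemma inv_apply_singleton (hg : g ∈ rotational A) (y : A) : g⁻¹ [y] = [y - rot g] := by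
  rw [Equiv.Perm.inv_eq_iff_eq, apply_singleton hg, sub_add_cancel]

lemma apply_cons (hg : g ∈ rotational A) (y : A) (w : Vert A) :
    g (y :: w) = (y + rot g) :: sect g [y] w := by
  rw [← List.singleton_append, apply_append_eq hg.1, apply_singleton hg]
  rfl

lemma rot_mul (hg : g ∈ rotational A) (hh : h ∈ rotational A) :
    rot (g * h) = rot g + rot h := by
  have := apply_singleton (mul_mem hg hh) 0
  rw [Equiv.Perm.mul_apply, apply_singleton hh, apply_singleton hg, List.singleton_inj] at this
  rw [add_comm]
  simpa using this.symm

lemma rot_inv (hg : g ∈ rotational A) : rot g⁻¹ = -rot g := by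
  rw [eq_neg_iff_add_eq_zero, ← rot_mul (inv_mem hg) hg, inv_mul_cancel]
  rfl

lemma rot_zpow (hg : g ∈ rotational A) (n : ℤ) : rot (g ^ n) = n • rot g := by
  induction n using Int.induction_on with
  | zero => rw [zpow_zero, zero_zsmul]; rfl
  | succ n ih => rw [zpow_add_one, rot_mul (zpow_mem hg _) hg, ih, add_zsmul, one_zsmul]
  | pred n ih =>
    rw [zpow_sub_one, rot_mul (zpow_mem hg _) (inv_mem hg), ih, rot_inv hg, sub_zsmul, one_zsmul]

lemma sectGrp_vstab_cons {H : Subgroup (Equiv.Perm (Vert A))} (hH : H ≤ rotational A) (x : A)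
    (w : Vert A) :
    sectGrp (vstab H (x :: w)) (x :: w) = sectGrp (vstab (sectGrp (vstab H [x]) [x]) w) w := by
  have hfix : ∀ g ∈ H, g [x] = [x] ↔ rot g = 0 := fun g hg => by
    rw [apply_singleton (hH hg), List.singleton_inj, add_eq_left]
  refine congrArg Subgroup.closure (Set.ext fun σ => ⟨?_, ?_⟩)
  · rintro ⟨g, hg, rfl⟩
    obtain ⟨hgH, hgv⟩ := mem_vstab.mp hg
    rw [apply_cons (hH hgH), List.cons_eq_cons, add_eq_left] at hgv
    have hgx : g ∈ vstab H [x] := mem_vstab.mpr ⟨hgH, (hfix g hgH).mpr hgv.1⟩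
    refine ⟨sect g [x], mem_vstab.mpr ⟨subset_closure ⟨g, hgx, rfl⟩, hgv.2⟩, ?_⟩
    exact (sect_append (hH hgH).1 [x] w).symm
  · rintro ⟨_, hh, rfl⟩
    obtain ⟨hhK, hhw⟩ := mem_vstab.mp hh
    obtain ⟨g, hgx, rfl⟩ :=
      exists_sect_eq_of_mem_sectGrp (vstab_mono (hH.trans rotational_le_sectional) _) hhK
    obtain ⟨hgH, hgv⟩ := mem_vstab.mp hgx
    refine ⟨g, mem_vstab.mpr ⟨hgH, ?_⟩, sect_append (hH hgH).1 [x] w⟩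
    rw [apply_cons (hH hgH), (hfix g hgH).mp hgv, add_zero, hhw]

lemma sect_mul_mul_inv_singleton (hg : g ∈ rotational A) (hs : s ∈ rotational A)
    (hh : h ∈ rotational A) (hrot : rot h = rot g + rot s) (x : A) :
    sect (g * s * h⁻¹) [x] =
      sect g [x - rot g] * sect s [x - rot h] * (sect h [x - rot h])⁻¹ := by
  have hx : x - rot h + rot s = x - rot g := by rw [hrot]; abel
  rw [sect_mul (mul_mem hg.1 hs.1) (inv_mem hh.1), sect_mul hg.1 hs.1, sect_inv hh.1,
    inv_apply_singleton hh, apply_singleton hs, hx]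

lemma closure_schreier_eq_vstab_singleton {S : Set (Equiv.Perm (Vert A))}
    (hS : closure S ≤ rotational A) {r : A → Equiv.Perm (Vert A)}
    (hr : ∀ α, r α ∈ closure S) (hrot : ∀ α, rot (r α) = α) (x : A) :
    closure (Set.image2 (fun α s => r α * s * (r (α + rot s))⁻¹) Set.univ S) =
      vstab (closure S) [x] := by
  refine le_antisymm ((closure_le _).mpr ?_) fun g hg => ?_
  · rintro _ ⟨α, -, s, hs, rfl⟩
    have hsS := subset_closure hs
    have hw := mul_mem (mul_mem (hr α) hsS) (inv_mem (hr (α + rot s)))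
    refine mem_vstab.mpr ⟨hw, ?_⟩
    rw [apply_singleton (hS hw), rot_mul (mul_mem (hS (hr α)) (hS hsS)) (inv_mem (hS (hr _))),
      rot_mul (hS (hr α)) (hS hsS), rot_inv (hS (hr _)), hrot, hrot, add_neg_cancel, add_zero]
  · obtain ⟨hgS, hgx⟩ := mem_vstab.mp hg
    refine mem_closure_schreier (fun g hg h hh => rot_mul (hS hg) (hS hh)) (hr 0) (hrot 0) hgS ?_
    rwa [apply_singleton (hS hgS), List.singleton_inj, add_eq_left] at hgx

/-- `t ^ n` moves `[y]` along the orbit `y, y + rot t, …` (backwards if `n < 0`), and its section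
at `[y]` is the product of the sections of `t` at the vertices passed. -/
lemma sect_zpow_singleton_mem (ht : t ∈ rotational A) {Q : Subgroup (Equiv.Perm (Vert A))}
    {y₀ : A} (hQ : ∀ y ≠ y₀, sect t [y] ∈ Q) {n : ℤ} {y : A}
    (hpath : ∀ l : ℤ, min 0 n ≤ l → l < max 0 n → y + l • rot t ≠ y₀) :
    sect (t ^ n) [y] ∈ Q := by
  induction n using Int.induction_on generalizing y with
  | zero => simpa only [zpow_zero, sect_one] using one_mem Q
  | succ n ih =>
    rw [zpow_add_one, sect_mul (zpow_mem ht.1 _) ht.1, apply_singleton ht]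
    refine mul_mem (ih fun l hl hl' => ?_) (hQ y ?_)
    · refine fun h => hpath (l + 1) (by omega) (by omega) ?_
      rw [← h, add_zsmul, one_zsmul]
      abel
    · simpa using hpath 0 (by omega) (by omega)
  | pred n ih =>
    rw [zpow_sub_one, sect_mul (zpow_mem ht.1 _) (inv_mem ht.1), sect_inv ht.1,
      inv_apply_singleton ht]
    refine mul_mem (ih fun l hl hl' => ?_) (inv_mem (hQ _ ?_))
    · refine fun h => hpath (l - 1) (by omega) (by omega) ?_
      rw [← h, sub_zsmul, one_zsmul]
      abel
    · refine fun h => hpath (-1) (by omega) (by omega) ?_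
      rw [← h, neg_one_zsmul, sub_eq_add_neg]

end Rotational

variable {p : ℕ} {e : Fin (p - 1) → ZMod p} {g : Equiv.Perm (Vert (ZMod p))}

/-- The exponents are taken from the window `[-d, p - d)`, where `y₀ = x + d • rot t`: along the
orbit from `x - α` to `x` the offset from `y₀` then stays in `[1 - p, -1]`, so `y₀` is never
met. -/
lemma exists_transversal_sect_mem (hp : p.Prime) {t : Equiv.Perm (Vert (ZMod p))}
    (ht : t ∈ rotational (ZMod p)) (hc : rot t ≠ 0) {Q : Subgroup (Equiv.Perm (Vert (ZMod p)))}
    {y₀ : ZMod p} (hQ : ∀ y ≠ y₀, sect t [y] ∈ Q) (x : ZMod p) :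
    ∃ r : ZMod p → Equiv.Perm (Vert (ZMod p)),
      ∀ α, r α ∈ zpowers t ∧ rot (r α) = α ∧ sect (r α) [x - α] ∈ Q := by
  have := Fact.mk hp
  set c := rot t
  set d := ((y₀ - x) * c⁻¹).val
  have hd : (d : ZMod p) * c = y₀ - x := by
    rw [ZMod.natCast_zmod_val, inv_mul_cancel_right₀ hc]
  let n : ZMod p → ℤ := fun α => ((α * c⁻¹ + d).val : ℤ) - d
  have hn : ∀ α, (n α : ZMod p) * c = α := fun α => by
    simp only [n, Int.cast_sub, Int.cast_natCast, ZMod.natCast_zmod_val, add_sub_cancel_right,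
      inv_mul_cancel_right₀ hc]
  refine ⟨fun α => t ^ n α, fun α => ⟨zpow_mem_zpowers t _,
    by rw [rot_zpow ht, zsmul_eq_mul, hn], sect_zpow_singleton_mem ht hQ fun l hl hl' h => ?_⟩⟩
  have hdvd : (p : ℤ) ∣ l - n α - d := by
    rw [← ZMod.intCast_zmod_eq_zero_iff_dvd]
    refine (mul_eq_zero.mp ?_).resolve_right hc
    rw [zsmul_eq_mul] at h
    push_cast
    linear_combination h - hn α - hd
  have hv := ZMod.val_lt (α * c⁻¹ + (d : ZMod p))
  have hnα : n α = ((α * c⁻¹ + d).val : ℤ) - d := rfl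
  have hdp := ZMod.val_lt ((y₀ - x) * c⁻¹)
  have := Int.eq_zero_of_abs_lt_dvd hdvd (abs_lt.mpr ⟨by omega, by omega⟩)
  omega

lemma val_lt_sub_one_of_ne_neg_one [NeZero p] {z : ZMod p} (hz : z ≠ -1) : z.val < p - 1 := by
  refine lt_of_le_of_ne (Nat.le_sub_one_of_lt z.val_lt) fun h => hz ?_
  rw [← ZMod.natCast_zmod_val z, h, Nat.cast_pred (NeZero.pos p), ZMod.natCast_self, zero_sub]

lemma aPerm_zpow_cons (i : ℤ) (x : ZMod p) (w : Vert (ZMod p)) :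
    (aPerm p ^ i) (x :: w) = (x + i) :: w := by
  induction i using Int.induction_on generalizing x with
  | zero => simp
  | succ n ih =>
    rw [zpow_add_one, Equiv.Perm.mul_apply]
    exact (ih (x + 1)).trans (by push_cast; ring_nf)
  | pred n ih =>
    rw [zpow_sub_one, Equiv.Perm.mul_apply]
    exact (ih (x - 1)).trans (by push_cast; ring_nf)

lemma bPerm_cons (x : ZMod p) (w : Vert (ZMod p)) :
    bPerm p e (x :: w) =
      x :: (if h : x.val < p - 1 then aPerm p ^ (e ⟨x.val, h⟩).val else bPerm p e) w := by
  show bFun p e (x :: w) = _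
  rw [bFun]
  split_ifs <;> rfl

lemma aPerm_mem_rotational : aPerm p ∈ rotational (ZMod p) := by
  refine ⟨?_, 1, fun _ => rfl⟩
  rintro (_ | ⟨x, v⟩)
  · exact ⟨aPerm p, fun _ => rfl⟩
  · exact ⟨1, fun _ => rfl⟩

lemma bPerm_singleton (y : ZMod p) : bPerm p e [y] = [y] := by
  rw [bPerm_cons]
  split_ifs
  · rw [apply_nil (pow_mem aPerm_mem_rotational.1 _)]
  · rfl

lemma bPerm_mem_rotational : bPerm p e ∈ rotational (ZMod p) := by
  refine ⟨fun v => ?_, 0, fun y => by rw [bPerm_singleton, add_zero]⟩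
  induction v with
  | nil => exact ⟨bPerm p e, fun _ => rfl⟩
  | cons x v ih =>
    simp only [List.cons_append, bPerm_cons]
    split_ifs
    · obtain ⟨s, hs⟩ := pow_mem aPerm_mem_rotational.1 _ v
      exact ⟨s, fun w => by rw [hs]⟩
    · obtain ⟨s, hs⟩ := ih
      exact ⟨s, fun w => by rw [hs]⟩

lemma GGSGroup_le_rotational : GGSGroup p e ≤ rotational (ZMod p) := by
  rw [GGSGroup, closure_le]
  rintro _ (rfl | rfl)
  exacts [aPerm_mem_rotational, bPerm_mem_rotational]

lemma sect_aPerm_zpow_singleton (i : ℤ) (y : ZMod p) : sect (aPerm p ^ i) [y] = 1 :=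
  sect_eq_of_forall (zpow_mem aPerm_mem_rotational.1 i) fun w => by
    rw [List.singleton_append, aPerm_zpow_cons, aPerm_zpow_cons]
    rfl

lemma sect_bPerm_singleton (y : ZMod p) :
    sect (bPerm p e) [y] =
      if h : y.val < p - 1 then aPerm p ^ (e ⟨y.val, h⟩).val else bPerm p e := by
  ext w : 1
  have := apply_cons (bPerm_mem_rotational (e := e)) y w
  rw [bPerm_cons, List.cons_eq_cons] at this
  exact this.2.symm

/-- In `G_e` these are exactly the elements of `b`-length at most `1`. -/
def abaSet (p : ℕ) (e : Fin (p - 1) → ZMod p) : Set (Equiv.Perm (Vert (ZMod p))) :=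
  {g | ∃ i j k : ℤ, g = aPerm p ^ i * bPerm p e ^ j * aPerm p ^ k}

lemma abaSet_subset_GGSGroup : abaSet p e ⊆ GGSGroup p e := by
  rintro _ ⟨i, j, k, rfl⟩
  have ha : aPerm p ∈ GGSGroup p e := subset_closure (Set.mem_insert _ _)
  have hb : bPerm p e ∈ GGSGroup p e := subset_closure (Set.mem_insert_of_mem _ rfl)
  exact mul_mem (mul_mem (zpow_mem ha i) (zpow_mem hb j)) (zpow_mem ha k)

lemma zpow_mul_mul_zpow_mem_abaSet (hg : g ∈ abaSet p e) (m n : ℤ) :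
    aPerm p ^ m * g * aPerm p ^ n ∈ abaSet p e := by
  obtain ⟨i, j, k, rfl⟩ := hg
  exact ⟨m + i, j, k + n, by group⟩

lemma sect_aba_singleton (i j k : ℤ) (y : ZMod p) :
    sect (aPerm p ^ i * bPerm p e ^ j * aPerm p ^ k) [y] = sect (bPerm p e) [y + k] ^ j := by
  have ha := aPerm_mem_rotational (p := p)
  have hb := bPerm_mem_rotational (e := e)
  rw [sect_mul (mul_mem (zpow_mem ha.1 i) (zpow_mem hb.1 j)) (zpow_mem ha.1 k),
    sect_mul (zpow_mem ha.1 i) (zpow_mem hb.1 j), aPerm_zpow_cons,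
    Equiv.Perm.zpow_apply_eq_self_of_apply_eq_self (bPerm_singleton _), sect_aPerm_zpow_singleton,
    sect_aPerm_zpow_singleton, sect_zpow_of_apply_eq hb.1 (bPerm_singleton _), one_mul, mul_one]

lemma sect_singleton_mem_abaSet (hg : g ∈ abaSet p e) (y : ZMod p) :
    sect g [y] ∈ abaSet p e := by
  obtain ⟨i, j, k, rfl⟩ := hg
  rw [sect_aba_singleton, sect_bPerm_singleton]
  split_ifs
  · exact ⟨_ * j, 0, 0, by rw [← zpow_natCast, ← zpow_mul]; group⟩
  · exact ⟨0, j, 0, by group⟩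

/-- For `a^i b^j a^k` the exceptional vertex is `[-1 - k]`, which `a^k` maps to `[-1]`, the vertex
where `b` has section `b`. -/
lemma exists_sect_singleton_mem_zpowers [NeZero p] (hg : g ∈ abaSet p e) :
    ∃ y₀, ∀ y ≠ y₀, sect g [y] ∈ zpowers (aPerm p) := by
  obtain ⟨i, j, k, rfl⟩ := hg
  refine ⟨-1 - k, fun y hy => ?_⟩
  have hyk : (y + k).val < p - 1 := val_lt_sub_one_of_ne_neg_one fun h => hy (by
    rw [← h]; ring)
  rw [sect_aba_singleton, sect_bPerm_singleton, dif_pos hyk]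
  exact zpow_mem (pow_mem (mem_zpowers _) _) j

lemma bWordLe_zpow_aPerm_mul {n : ℕ} (h : bWordLe p e g n) (m : ℤ) :
    bWordLe p e (aPerm p ^ m * g) n := by
  obtain ⟨i, j, rfl⟩ := h
  refine ⟨Function.update i 0 (m + i 0), j, ?_⟩
  cases n with
  | zero => simp [zpow_add]
  | succ n => simp [List.range_succ_eq_map, Function.comp_def, Function.update, zpow_add, mul_assoc]

lemma bWordLe_zpow_bPerm_mul {n : ℕ} (h : bWordLe p e g n) (m : ℤ) :
    bWordLe p e (bPerm p e ^ m * g) (n + 1) := by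
  obtain ⟨i, j, rfl⟩ := h
  refine ⟨fun k => if k = 0 then 0 else i (k - 1), fun k => if k = 0 then m else j (k - 1), ?_⟩
  simp [List.range_succ_eq_map, Function.comp_def, mul_assoc]

lemma exists_bWordLe (hg : g ∈ GGSGroup p e) : ∃ n, bWordLe p e g n := by
  induction hg using closure_induction_left with
  | one => exact ⟨0, fun _ => 0, fun _ => 0, by simp⟩
  | mul_left x hx y _ ih =>
    obtain ⟨n, hn⟩ := ih
    rcases hx with rfl | rfl
    · exact ⟨n, by simpa using bWordLe_zpow_aPerm_mul hn 1⟩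
    · exact ⟨n + 1, by simpa using bWordLe_zpow_bPerm_mul hn 1⟩
  | inv_mul_cancel x hx y _ ih =>
    obtain ⟨n, hn⟩ := ih
    rcases hx with rfl | rfl
    · exact ⟨n, by simpa using bWordLe_zpow_aPerm_mul hn (-1)⟩
    · exact ⟨n + 1, by simpa using bWordLe_zpow_bPerm_mul hn (-1)⟩

lemma bLen_le_one_of_mem_abaSet (hg : g ∈ abaSet p e) : bLen p e g ≤ 1 := by
  obtain ⟨i, j, k, rfl⟩ := hg
  exact Nat.sInf_le ⟨fun n => if n = 0 then i else k, fun _ => j, by simp [mul_assoc]⟩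

lemma mem_abaSet_of_bLen_le_one (hg : g ∈ GGSGroup p e) (h : bLen p e g ≤ 1) :
    g ∈ abaSet p e := by
  obtain ⟨i, j, hij⟩ : bWordLe p e g (bLen p e g) := Nat.sInf_mem (exists_bWordLe hg)
  rcases Nat.le_one_iff_eq_zero_or_eq_one.mp h with h | h <;> rw [h] at hij
  · exact ⟨i 0, 0, 0, by simpa using hij⟩
  · exact ⟨i 0, j 0, i 1, by simpa using hij⟩

def AbaGenerated (p : ℕ) (e : Fin (p - 1) → ZMod p)
    (K : Subgroup (Equiv.Perm (Vert (ZMod p)))) : Prop :=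
  ∃ S ⊆ abaSet p e, closure S = K

lemma closure_le_rotational {S : Set (Equiv.Perm (Vert (ZMod p)))} (hS : S ⊆ abaSet p e) :
    closure S ≤ rotational (ZMod p) :=
  ((closure_le _).mpr (hS.trans abaSet_subset_GGSGroup)).trans GGSGroup_le_rotational

lemma abaGenerated_sectGrp_vstab_singleton_of_forall_rot_eq_zero
    {S : Set (Equiv.Perm (Vert (ZMod p)))} (hS : S ⊆ abaSet p e) (hrot : ∀ s ∈ S, rot s = 0)
    (x : ZMod p) : AbaGenerated p e (sectGrp (vstab (closure S) [x]) [x]) := by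
  have hfix : closure S ≤ vstab (rotational (ZMod p)) [x] := (closure_le _).mpr fun s hs =>
    mem_vstab.mpr ⟨closure_le_rotational hS (subset_closure hs),
      by rw [apply_singleton (closure_le_rotational hS (subset_closure hs)), hrot s hs, add_zero]⟩
  have hv : vstab (closure S) [x] = closure S :=
    le_antisymm (fun _ hg => hg.1) fun g hg => mem_vstab.mpr ⟨hg, (mem_vstab.mp (hfix hg)).2⟩
  refine ⟨(sect · [x]) '' S,
    Set.image_subset_iff.mpr fun s hs => sect_singleton_mem_abaSet (hS hs) x, ?_⟩
  rw [hv, sectGrp_closure (hfix.trans (vstab_mono rotational_le_sectional _))]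

lemma abaGenerated_sectGrp_vstab_singleton_of_rot_ne_zero (hp : p.Prime)
    {S : Set (Equiv.Perm (Vert (ZMod p)))} (hS : S ⊆ abaSet p e) {t : Equiv.Perm (Vert (ZMod p))}
    (htS : t ∈ S) (ht : rot t ≠ 0) (x : ZMod p) :
    AbaGenerated p e (sectGrp (vstab (closure S) [x]) [x]) := by
  have := NeZero.of_pos hp.pos
  have hH := closure_le_rotational hS
  obtain ⟨y₀, hy₀⟩ := exists_sect_singleton_mem_zpowers (hS htS)
  obtain ⟨r, hr⟩ := exists_transversal_sect_mem hp (hH (subset_closure htS)) ht hy₀ x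
  have hrH (α : ZMod p) : r α ∈ closure S := zpowers_le.mpr (subset_closure htS) (hr α).1
  set Gen := Set.image2 (fun α s => r α * s * (r (α + rot s))⁻¹) Set.univ S
  have hGen := closure_schreier_eq_vstab_singleton hH hrH (fun α => (hr α).2.1) x
  refine ⟨(sect · [x]) '' Gen, ?_, ?_⟩
  · rintro _ ⟨_, ⟨α, -, s, hs, rfl⟩, rfl⟩
    obtain ⟨m, hm⟩ := mem_zpowers_iff.mp (hr α).2.2
    obtain ⟨n, hn⟩ := mem_zpowers_iff.mp (hr (α + rot s)).2.2
    have hrot : rot (r (α + rot s)) = rot (r α) + rot s := by rw [(hr α).2.1, (hr _).2.1]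
    dsimp only
    rw [sect_mul_mul_inv_singleton (hH (hrH α)) (hH (subset_closure hs)) (hH (hrH _)) hrot,
      (hr α).2.1, (hr _).2.1, ← hm, ← hn, ← zpow_neg]
    exact zpow_mul_mul_zpow_mem_abaSet (sect_singleton_mem_abaSet (hS hs) _) _ _
  · rw [← hGen, sectGrp_closure]
    exact hGen.le.trans (vstab_mono (hH.trans rotational_le_sectional) _)

lemma AbaGenerated.sectGrp_vstab_singleton (hp : p.Prime)
    {H : Subgroup (Equiv.Perm (Vert (ZMod p)))} (hH : AbaGenerated p e H) (x : ZMod p) :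
    AbaGenerated p e (sectGrp (vstab H [x]) [x]) := by
  obtain ⟨S, hS, rfl⟩ := hH
  by_cases hrot : ∀ s ∈ S, rot s = 0
  · exact abaGenerated_sectGrp_vstab_singleton_of_forall_rot_eq_zero hS hrot x
  · obtain ⟨t, htS, ht⟩ := not_forall₂.mp hrot
    exact abaGenerated_sectGrp_vstab_singleton_of_rot_ne_zero hp hS htS ht x

lemma AbaGenerated.sectGrp_vstab (hp : p.Prime) (v : Vert (ZMod p)) :
    ∀ {H : Subgroup (Equiv.Perm (Vert (ZMod p)))}, AbaGenerated p e H →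
      AbaGenerated p e (sectGrp (vstab H v) v) := by
  induction v with
  | nil =>
    rintro _ ⟨S, hS, rfl⟩
    exact ⟨S, hS,
      (sectGrp_vstab_nil ((closure_le_rotational hS).trans rotational_le_sectional)).symm⟩
  | cons x w ih =>
    rintro _ ⟨S, hS, rfl⟩
    rw [sectGrp_vstab_cons (closure_le_rotational hS) x w]
    exact ih (AbaGenerated.sectGrp_vstab_singleton hp ⟨S, hS, rfl⟩ x)

end GGS

theorem statement17_general (p : ℕ) (hp : p.Prime)
    (e : Fin (p - 1) → ZMod p)
    (H : Subgroup (Equiv.Perm (Vert (ZMod p)))) (hHG : H < GGSGroup p e)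
    (hgen : ∃ S : Set (Equiv.Perm (Vert (ZMod p))),
      (∀ s ∈ S, bLen p e s ≤ 1) ∧ Subgroup.closure S = H) :
    ∀ v : Vert (ZMod p),
      ∃ S' : Set (Equiv.Perm (Vert (ZMod p))),
        Subgroup.closure S' = sectGrp (vstab H v) v ∧
        ∀ s ∈ S', bLen p e s ≤ 1 := by
  intro v
  obtain ⟨S, hSlen, hSH⟩ := hgen
  have hS : S ⊆ GGS.abaSet p e := fun s hs =>
    GGS.mem_abaSet_of_bLen_le_one (hHG.le (hSH ▸ Subgroup.subset_closure hs)) (hSlen s hs)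
  obtain ⟨S', hS', hS'v⟩ := GGS.AbaGenerated.sectGrp_vstab hp v ⟨S, hS, hSH⟩
  exact ⟨S', hS'v, fun s hs => GGS.bLen_le_one_of_mem_abaSet (hS' hs)⟩

/-- Lemma 4.13: if `H < G` is a subgroup of a torsion GGS group generated by
elements of `b`-length at most `1`, then for every vertex `v` of the tree the
subgroup `φ_v(Stab_H(v))` is generated by elements of `b`-length at most `1`. -/
theorem statement17 (p : ℕ) (hp : p.Prime) (hodd : Odd p)
    (e : Fin (p - 1) → ZMod p) (he : e ≠ 0)
    (htor : ∀ g ∈ GGSGroup p e, IsOfFinOrder g)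
    (H : Subgroup (Equiv.Perm (Vert (ZMod p)))) (hHG : H < GGSGroup p e)
    (hgen : ∃ S : Set (Equiv.Perm (Vert (ZMod p))),
      (∀ s ∈ S, bLen p e s ≤ 1) ∧ Subgroup.closure S = H) :
    ∀ v : Vert (ZMod p),
      ∃ S' : Set (Equiv.Perm (Vert (ZMod p))),
        Subgroup.closure S' = sectGrp (vstab H v) v ∧
        ∀ s ∈ S', bLen p e s ≤ 1 :=
  statement17_general p hp e H hHG hgen
end
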